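/- Let n ≥ 1, let λ be a partition of d, let μ be a partition of n, and let g, g' ∈ S_n be two permutations of the same cycle type. Then the number of sequences (τ_1,…,τ_d) of transpositions of S_n with signature λ such that (τ_1 ⋯ τ_d)^{−1} g has cycle type μ equals the number of such sequences with (τ_1 ⋯ τ_d)^{−1} g' of cycle type μ; i.e., the weighted path count between conjugacy classes in the Cayley graph of S_n generated by transpositions depends only on the cycle types. -/

import Mathlib

/-!
Group the paths by the word `b` of their larger letters. The transpositions `(a v)`, `a < v`,
sum to the Jucys–Murphy element `X_v ∈ ℚ[S_n]`, so the paths of signature `λ` sum to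
`Z_λ = ∑_b X_{b_1} ⋯ X_{b_d}`, the word `b` ranging over a set closed under permuting letters,
and the count for `g` is `∑_x Z_λ(x) [x⁻¹ g has cycle type μ]`. It therefore suffices that `Z_λ`
is central. Conjugation by an adjacent transposition `s = (i i+1)` fixes `X_v` for `v ≠ i, i+1`
and sends `(X_i, X_{i+1})` to `(X_{i+1} - s, X_i + s)`, a commuting pair with the same sum and
product. Hence it fixes `M(b) + M(s ∘ b)` for every monomial `M(b)`, and so it fixes `Z_λ`.
-/

/-- The signature of a sequence of transpositions `(a_m b_m)`, `a_m < b_m`, encoded by the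
function `b : Fin d → Fin n` of second (larger) elements. -/
def signatureOf {n d : ℕ} (b : Fin d → Fin n) : Multiset ℕ :=
  (Finset.univ.val.map fun v : Fin n =>
    (Finset.univ.filter fun m : Fin d => b m = v).card).filter (fun c => c ≠ 0)

/-- The number of `d`-step sequences `(τ_1,…,τ_d)` of transpositions of `S_n` with
signature `λ` such that `(τ_1 ⋯ τ_d)⁻¹ g` has cycle type `μ`. -/
noncomputable def pathCount (n d : ℕ) (lam : Nat.Partition d) (μ : Nat.Partition n)
    (g : Equiv.Perm (Fin n)) : ℕ :=
  (Finset.univ.filter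
    (fun p : (Fin d → Fin n) × (Fin d → Fin n) =>
      (∀ m, p.1 m < p.2 m) ∧ signatureOf p.2 = lam.parts ∧
        (((List.ofFn fun m : Fin d => Equiv.swap (p.1 m) (p.2 m)).prod)⁻¹ *
            g).partition.parts = μ.parts)).card

open Equiv Finset MonoidAlgebra

section CommutingPair

variable {R : Type*} [Ring R] {a b a' b' : R}

theorem Commute.pow_add_pow_add_two (h : Commute a b) (k : ℕ) :
    a ^ (k + 2) + b ^ (k + 2) =
      (a ^ (k + 1) + b ^ (k + 1)) * (a + b) - (a ^ k + b ^ k) * (a * b) := by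
  have hba : b ^ (k + 1) * a = a * b ^ (k + 1) := ((h.symm).pow_left (k + 1)).eq
  have hbab : b ^ k * (a * b) = a * b ^ (k + 1) := by
    rw [← mul_assoc, ((h.symm).pow_left k).eq, mul_assoc, ← pow_succ]
  have haab : a ^ k * (a * b) = a ^ (k + 1) * b := by rw [← mul_assoc, ← pow_succ]
  simp only [add_mul, mul_add, hba, hbab, haab, ← pow_succ]
  abel

theorem Commute.pow_add_pow_eq_of_add_eq_of_mul_eq (h : Commute a b) (h' : Commute a' b')
    (hs : a' + b' = a + b) (hp : a' * b' = a * b) (k : ℕ) :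
    a' ^ k + b' ^ k = a ^ k + b ^ k := by
  induction k using Nat.twoStepInduction with
  | zero => simp
  | one => simpa using hs
  | more k ih₀ ih₁ => rw [h.pow_add_pow_add_two, h'.pow_add_pow_add_two, ih₀, ih₁, hs, hp]

theorem Commute.pow_mul_pow_add_pow_mul_pow_of_le (h : Commute a b) {p q : ℕ} (hqp : q ≤ p) :
    a ^ p * b ^ q + a ^ q * b ^ p = (a * b) ^ q * (a ^ (p - q) + b ^ (p - q)) := by
  rw [h.mul_pow, mul_add, mul_assoc, ((h.symm).pow_pow q (p - q)).eq, ← mul_assoc, ← pow_add,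
    mul_assoc, ← pow_add, Nat.add_sub_cancel' hqp]

theorem Commute.pow_mul_pow_add_pow_mul_pow_eq_of_add_eq_of_mul_eq (h : Commute a b)
    (h' : Commute a' b') (hs : a' + b' = a + b) (hp : a' * b' = a * b) (p q : ℕ) :
    a' ^ p * b' ^ q + a' ^ q * b' ^ p = a ^ p * b ^ q + a ^ q * b ^ p := by
  wlog hqp : q ≤ p generalizing p q
  · rw [add_comm, add_comm (a ^ p * _)]
    exact this q p (le_of_not_ge hqp)
  rw [h.pow_mul_pow_add_pow_mul_pow_of_le hqp, h'.pow_mul_pow_add_pow_mul_pow_of_le hqp, hp,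
    h.pow_add_pow_eq_of_add_eq_of_mul_eq h' hs hp]

end CommutingPair

namespace List

variable {ι : Type*} [DecidableEq ι]

theorem prod_map_eq_pow_count_mul {M : Type*} [Monoid M] {f : ι → M} (i : ι)
    (hf : ∀ v, Commute (f i) (f v)) (l : List ι) :
    (l.map f).prod = f i ^ l.count i * (l.map (Function.update f i 1)).prod := by
  induction l with
  | nil => simp
  | cons v l ih =>
    rcases eq_or_ne v i with rfl | hvi
    · simp [ih, pow_succ', mul_assoc]
    · rw [map_cons, prod_cons, ih, count_cons_of_ne hvi, ← mul_assoc,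
        ((hf v).pow_left _).symm.eq, mul_assoc, map_cons, prod_cons,
        Function.update_of_ne hvi]

variable {R : Type*} [Ring R]

theorem prod_map_eq_pow_mul_pow_mul {f : ι → R} (hf : ∀ u v, Commute (f u) (f v)) {i j : ι}
    (hij : i ≠ j) (l : List ι) :
    (l.map f).prod = f i ^ l.count i * f j ^ l.count j *
      (l.map (Function.update (Function.update f i 1) j 1)).prod := by
  have hf₁ : ∀ v, Commute (Function.update f i 1 j) (Function.update f i 1 v) := by
    intro v
    rw [Function.update_of_ne hij.symm, Function.update_apply]
    split_ifs
    exacts [Commute.one_right _, hf j v]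
  rw [prod_map_eq_pow_count_mul i (hf i), prod_map_eq_pow_count_mul j hf₁,
    Function.update_of_ne hij.symm, mul_assoc]

theorem prod_map_add_prod_map_swap_eq {f f' : ι → R} (hf : ∀ u v, Commute (f u) (f v))
    (hf' : ∀ u v, Commute (f' u) (f' v)) {i j : ι} (hij : i ≠ j)
    (hoff : ∀ v, v ≠ i → v ≠ j → f' v = f v) (hs : f' i + f' j = f i + f j)
    (hp : f' i * f' j = f i * f j) (l : List ι) :
    (l.map f').prod + ((l.map (Equiv.swap i j)).map f').prod =
      (l.map f).prod + ((l.map (Equiv.swap i j)).map f).prod := by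
  have hrest : Function.update (Function.update f' i 1) j 1 =
      Function.update (Function.update f i 1) j 1 := by
    funext v
    by_cases hvj : v = j
    · simp [hvj]
    by_cases hvi : v = i
    · simp [hvi, hij]
    · simp [hvi, hvj, hoff v hvi hvj]
  have hswap : (l.map (Equiv.swap i j)).map (Function.update (Function.update f i 1) j 1) =
      l.map (Function.update (Function.update f i 1) j 1) := by
    rw [map_map]
    refine map_congr_left fun v => ?_
    by_cases hvi : v = i
    · simp [hvi, hij]
    by_cases hvj : v = j
    · simp [hvj, hij]
    · simp [Equiv.swap_apply_of_ne_of_ne hvi hvj]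
  have hci : (l.map (Equiv.swap i j)).count i = l.count j := by
    simpa using count_map_of_injective l _ (Equiv.swap i j).injective j
  have hcj : (l.map (Equiv.swap i j)).count j = l.count i := by
    simpa using count_map_of_injective l _ (Equiv.swap i j).injective i
  rw [prod_map_eq_pow_mul_pow_mul hf hij, prod_map_eq_pow_mul_pow_mul hf hij (l.map _),
    prod_map_eq_pow_mul_pow_mul hf' hij, prod_map_eq_pow_mul_pow_mul hf' hij (l.map _),
    hrest, hswap, hci, hcj, ← add_mul, ← add_mul,
    (hf i j).pow_mul_pow_add_pow_mul_pow_eq_of_add_eq_of_mul_eq (hf' i j) hs hp]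

end List

theorem Finset.sum_prod_map_ofFn_eq_of_swap_invariant {ι R : Type*} [DecidableEq ι] [Ring R]
    [Module ℚ R] {d : ℕ} {T : Finset (Fin d → ι)} {f f' : ι → R}
    (hf : ∀ u v, Commute (f u) (f v)) (hf' : ∀ u v, Commute (f' u) (f' v)) {i j : ι}
    (hij : i ≠ j) (hT : ∀ b ∈ T, swap i j ∘ b ∈ T)
    (hoff : ∀ v, v ≠ i → v ≠ j → f' v = f v) (hs : f' i + f' j = f i + f j)
    (hp : f' i * f' j = f i * f j) :
    ∑ b ∈ T, ((List.ofFn b).map f').prod = ∑ b ∈ T, ((List.ofFn b).map f).prod := by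
  have hreindex (g : ι → R) : ∑ b ∈ T, ((List.ofFn (swap i j ∘ b)).map g).prod =
      ∑ b ∈ T, ((List.ofFn b).map g).prod :=
    sum_nbij' (swap i j ∘ ·) (swap i j ∘ ·) hT hT
      (fun b _ => by funext m; simp) (fun b _ => by funext m; simp) (fun _ _ => rfl)
  have hpair : ∑ b ∈ T, (((List.ofFn b).map f').prod +
        ((List.ofFn (swap i j ∘ b)).map f').prod) =
      ∑ b ∈ T, (((List.ofFn b).map f).prod + ((List.ofFn (swap i j ∘ b)).map f).prod) :=
    sum_congr rfl fun b _ => by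
      simpa only [← List.map_ofFn] using
        List.prod_map_add_prod_map_swap_eq hf hf' hij hoff hs hp _
  rw [sum_add_distrib, sum_add_distrib, hreindex, hreindex] at hpair
  exact smul_right_injective R (two_ne_zero : (2 : ℚ) ≠ 0) <| by simpa only [two_smul] using hpair

theorem List.prod_ofFn_sum {R κ : Type*} [Semiring R] {d : ℕ} (t : Fin d → Finset κ)
    (f : Fin d → κ → R) :
    (List.ofFn fun m => ∑ x ∈ t m, f m x).prod =
      ∑ a ∈ Fintype.piFinset t, (List.ofFn fun m => f m (a m)).prod := by
  induction d with
  | zero => simp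
  | succ d ih =>
    have hpi : Fintype.piFinset t =
        (t 0 ×ˢ Fintype.piFinset (Fin.tail t)).map (Fin.consEquiv fun _ => κ).toEmbedding := by
      simpa using filter_piFinset_eq_map_consEquiv t fun _ => True
    rw [ofFn_succ, prod_cons, ih (fun m => t m.succ) (fun m => f m.succ), sum_mul_sum, hpi,
      sum_map, sum_product]
    simp only [Fin.consEquiv, Function.Embedding.coeFn_mk, coe_fn_mk, ofFn_succ, Fin.cons_zero,
      Fin.cons_succ, prod_cons]
    rfl

namespace MonoidAlgebra

variable {k G : Type*} [Semiring k] [Group G]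

noncomputable def conjRingHom (g : G) : MonoidAlgebra k G →+* MonoidAlgebra k G :=
  mapDomainRingHom k (MulAut.conj g).toMonoidHom

@[simp]
theorem conjRingHom_single (g x : G) (r : k) :
    conjRingHom g (single x r) = single (g * x * g⁻¹) r := by
  simp [conjRingHom]

theorem conjRingHom_mul_of (g : G) (x : MonoidAlgebra k G) :
    conjRingHom g x * of k G g = of k G g * x := by
  induction x using MonoidAlgebra.induction_linear with
  | zero => simp
  | add x y hx hy => rw [map_add, add_mul, mul_add, hx, hy]
  | single x r => simp [single_mul_single]

theorem coeff_conj_of_commute {g : G} {x : MonoidAlgebra k G} (h : Commute (of k G g) x)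
    (y : G) : x.coeff (g * y * g⁻¹) = x.coeff y := by
  have hcoeff := congrArg (fun z : MonoidAlgebra k G => z.coeff (g * y)) h.eq
  simpa using hcoeff.symm

end MonoidAlgebra

theorem Equiv.swap_apply_lt_iff {α : Type*} [LinearOrder α] {a b v : α} (h : a < v ↔ b < v)
    (x : α) : swap a b x < v ↔ x < v := by
  rw [swap_apply_def]
  split_ifs with hxa hxb
  · rw [hxa, h]
  · rw [hxb, h]
  · rfl

section JucysMurphy

variable (k : Type*) [Ring k] {α : Type*} [LinearOrder α] [LocallyFiniteOrderBot α]

noncomputable def jucysMurphy (v : α) : MonoidAlgebra k (Perm α) :=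
  ∑ a ∈ Iio v, of k (Perm α) (swap a v)

variable {k}

theorem conjRingHom_jucysMurphy (c : Perm α) (v : α) :
    conjRingHom c (jucysMurphy k v) = ∑ a ∈ Iio v, of k (Perm α) (swap (c a) (c v)) := by
  simp [jucysMurphy, swap_apply_apply]

theorem conjRingHom_jucysMurphy_of_stable {c : Perm α} {v : α} (hv : c v = v)
    (hc : ∀ a, c a < v ↔ a < v) : conjRingHom c (jucysMurphy k v) = jucysMurphy k v := by
  rw [conjRingHom_jucysMurphy, hv]
  exact sum_equiv c (by simp [hc]) fun _ _ => rfl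

theorem of_commute_jucysMurphy_of_stable {c : Perm α} {v : α} (hv : c v = v)
    (hc : ∀ a, c a < v ↔ a < v) : Commute (of k (Perm α) c) (jucysMurphy k v) := by
  have h := conjRingHom_mul_of c (jucysMurphy k v)
  rw [conjRingHom_jucysMurphy_of_stable hv hc] at h
  exact h.symm

theorem jucysMurphy_commute (u v : α) : Commute (jucysMurphy k u) (jucysMurphy k v) := by
  wlog huv : u < v generalizing u v
  · rcases (not_lt.1 huv).eq_or_lt with rfl | hvu
    · exact Commute.refl _
    · exact (this v u hvu).symm
  refine Commute.sum_left _ _ _ fun a ha => ?_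
  have hau : a < u := mem_Iio.1 ha
  exact of_commute_jucysMurphy_of_stable (swap_apply_of_ne_of_ne (hau.trans huv).ne' huv.ne')
    (swap_apply_lt_iff (iff_of_true (hau.trans huv) huv))

variable {i j : α}

theorem CovBy.finset_Iio_eq_insert (hij : i ⋖ j) : Iio j = insert i (Iio i) := by
  rw [Iio_insert, ← coe_inj, coe_Iio, coe_Iic, hij.Iio_eq]

theorem jucysMurphy_eq_add_sum_of_covBy (hij : i ⋖ j) :
    jucysMurphy k j = of k (Perm α) (swap i j) + ∑ a ∈ Iio i, of k (Perm α) (swap a j) := by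
  rw [jucysMurphy, hij.finset_Iio_eq_insert, sum_insert notMem_Iio_self]

theorem conjRingHom_swap_jucysMurphy_left (hij : i ⋖ j) :
    conjRingHom (swap i j) (jucysMurphy k i) = jucysMurphy k j - of k (Perm α) (swap i j) := by
  rw [jucysMurphy_eq_add_sum_of_covBy hij, add_sub_cancel_left, conjRingHom_jucysMurphy,
    swap_apply_left]
  refine sum_congr rfl fun a ha => ?_
  have hai : a < i := mem_Iio.1 ha
  rw [swap_apply_of_ne_of_ne hai.ne (hai.trans hij.lt).ne]

theorem conjRingHom_swap_jucysMurphy_right (hij : i ⋖ j) :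
    conjRingHom (swap i j) (jucysMurphy k j) = jucysMurphy k i + of k (Perm α) (swap i j) := by
  rw [conjRingHom_jucysMurphy, hij.finset_Iio_eq_insert, sum_insert notMem_Iio_self,
    swap_apply_left, swap_apply_right, swap_comm, add_comm, jucysMurphy]
  refine congrArg (· + _) (sum_congr rfl fun a ha => ?_)
  have hai : a < i := mem_Iio.1 ha
  rw [swap_apply_of_ne_of_ne hai.ne (hai.trans hij.lt).ne]

theorem conjRingHom_swap_jucysMurphy_of_ne (hij : i ⋖ j) {v : α} (hvi : v ≠ i)
    (hvj : v ≠ j) :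
    conjRingHom (swap i j) (jucysMurphy k v) = jucysMurphy k v := by
  refine conjRingHom_jucysMurphy_of_stable (swap_apply_of_ne_of_ne hvi hvj)
    (swap_apply_lt_iff ⟨fun hiv => (hij.ge_of_gt hiv).lt_of_ne hvj.symm, hij.lt.trans⟩)

theorem conjRingHom_swap_jucysMurphy_mul (hij : i ⋖ j) :
    conjRingHom (swap i j) (jucysMurphy k i) * conjRingHom (swap i j) (jucysMurphy k j) =
      jucysMurphy k i * jucysMurphy k j := by
  have hSX : of k (Perm α) (swap i j) * jucysMurphy k i =
      jucysMurphy k j * of k (Perm α) (swap i j) -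
        of k (Perm α) (swap i j) * of k (Perm α) (swap i j) := by
    rw [← conjRingHom_mul_of, conjRingHom_swap_jucysMurphy_left hij, sub_mul]
  rw [conjRingHom_swap_jucysMurphy_left hij, conjRingHom_swap_jucysMurphy_right hij, sub_mul,
    mul_add, mul_add, hSX, (jucysMurphy_commute j i).eq]
  abel

end JucysMurphy

theorem conjRingHom_swap_sum_prod_jucysMurphy {k α : Type*} [Ring k] [Module ℚ k]
    [LinearOrder α] [LocallyFiniteOrderBot α] {i j : α} (hij : i ⋖ j) {d : ℕ}
    {T : Finset (Fin d → α)}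
    (hT : ∀ b ∈ T, swap i j ∘ b ∈ T) :
    conjRingHom (swap i j) (∑ b ∈ T, ((List.ofFn b).map (jucysMurphy k)).prod) =
      ∑ b ∈ T, ((List.ofFn b).map (jucysMurphy k)).prod := by
  simp only [map_sum, map_list_prod, List.map_map]
  refine sum_prod_map_ofFn_eq_of_swap_invariant jucysMurphy_commute
    (fun u v => (jucysMurphy_commute u v).map _) hij.ne hT
    (fun v hvi hvj => conjRingHom_swap_jucysMurphy_of_ne hij hvi hvj) ?_
    (conjRingHom_swap_jucysMurphy_mul hij)
  simp only [Function.comp_apply, conjRingHom_swap_jucysMurphy_left hij,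
    conjRingHom_swap_jucysMurphy_right hij]
  abel

theorem signatureOf_perm_comp {n d : ℕ} (σ : Perm (Fin n)) (b : Fin d → Fin n) :
    signatureOf (σ ∘ b) = signatureOf b := by
  have hfiber (v : Fin n) : #{m | (σ ∘ b) m = v} = #{m | b m = σ.symm v} := by
    simp only [Function.comp_apply, ← eq_symm_apply]
  simp only [signatureOf, hfiber]
  conv_rhs => rw [← Multiset.map_univ_val_equiv σ.symm, Multiset.map_map]
  rfl

theorem Fin.castSucc_covBy_succ {n : ℕ} (i : Fin n) : i.castSucc ⋖ i.succ :=
  ⟨castSucc_lt_succ, fun _ h₁ h₂ => by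
    simp only [Fin.lt_def, val_castSucc, val_succ] at h₁ h₂
    omega⟩

section PathElement

variable {n d : ℕ}

def transpositionProd (p : (Fin d → Fin n) × (Fin d → Fin n)) : Perm (Fin n) :=
  (List.ofFn fun m => swap (p.1 m) (p.2 m)).prod

variable (n) in
def transpositionPaths (lam : Nat.Partition d) : Finset ((Fin d → Fin n) × (Fin d → Fin n)) :=
  {p | (∀ m, p.1 m < p.2 m) ∧ signatureOf p.2 = lam.parts}

def pathMultiplicity (lam : Nat.Partition d) (x : Perm (Fin n)) : ℕ :=
  #{p ∈ transpositionPaths n lam | transpositionProd p = x}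

variable (n) in
noncomputable def pathElement (lam : Nat.Partition d) : MonoidAlgebra ℚ (Perm (Fin n)) :=
  ∑ p ∈ transpositionPaths n lam, of ℚ _ (transpositionProd p)

theorem coeff_pathElement (lam : Nat.Partition d) (x : Perm (Fin n)) :
    (pathElement n lam).coeff x = pathMultiplicity lam x := by
  simp [pathElement, pathMultiplicity, coeff_sum, Finsupp.single_apply, Finset.sum_boole]

theorem pathElement_eq_sum_prod_jucysMurphy (lam : Nat.Partition d) :
    pathElement n lam =
      ∑ b ∈ {b : Fin d → Fin n | signatureOf b = lam.parts},
        ((List.ofFn b).map (jucysMurphy ℚ)).prod := by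
  rw [pathElement, sum_finset_product_right _ {b | signatureOf b = lam.parts}
    (fun b => Fintype.piFinset fun m => Iio (b m)) (by simp [transpositionPaths, and_comm])]
  refine sum_congr rfl fun b _ => ?_
  simp only [jucysMurphy, List.map_ofFn, Function.comp_def, List.prod_ofFn_sum,
    transpositionProd, map_list_prod]

theorem of_commute_pathElement (lam : Nat.Partition d) (c : Perm (Fin n)) :
    Commute (of ℚ _ c) (pathElement n lam) := by
  rcases n with _ | n
  · rw [Subsingleton.elim c 1, map_one]
    exact Commute.one_left _
  suffices hc : c ∈ (Submonoid.centralizer {pathElement (n + 1) lam}).comap (of ℚ _) from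
    (Submonoid.mem_centralizer_iff.1 (Submonoid.mem_comap.1 hc) _ rfl).symm
  refine Submonoid.closure_le.2 ?_ (Perm.mclosure_swap_castSucc_succ n ▸ Submonoid.mem_top c)
  rintro _ ⟨i, rfl⟩
  have hfix : conjRingHom (swap i.castSucc i.succ) (pathElement (n + 1) lam) =
      pathElement (n + 1) lam := by
    rw [pathElement_eq_sum_prod_jucysMurphy]
    exact conjRingHom_swap_sum_prod_jucysMurphy (Fin.castSucc_covBy_succ i)
      (by simp [signatureOf_perm_comp])
  rw [SetLike.mem_coe, Submonoid.mem_comap, Submonoid.mem_centralizer_iff]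
  rintro _ rfl
  rw [← hfix, conjRingHom_mul_of, hfix]

theorem pathMultiplicity_conj (lam : Nat.Partition d) (c x : Perm (Fin n)) :
    pathMultiplicity lam (c * x * c⁻¹) = pathMultiplicity lam x := by
  exact_mod_cast (coeff_pathElement lam _).symm.trans
    ((coeff_conj_of_commute (of_commute_pathElement lam c) x).trans (coeff_pathElement lam x))

theorem pathCount_eq_sum_pathMultiplicity (lam : Nat.Partition d) (μ : Nat.Partition n)
    (g : Perm (Fin n)) :
    pathCount n d lam μ g =
      ∑ x with (x⁻¹ * g).partition.parts = μ.parts, pathMultiplicity lam x := by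
  have hpaths : pathCount n d lam μ g =
      #{p ∈ transpositionPaths n lam |
        ((transpositionProd p)⁻¹ * g).partition.parts = μ.parts} := by
    simp only [pathCount, transpositionPaths, filter_filter, and_assoc]
    rfl
  rw [hpaths, card_eq_sum_card_fiberwise (f := transpositionProd)
    (t := {x | (x⁻¹ * g).partition.parts = μ.parts})
    fun p hp => by simpa using (mem_filter.1 hp).2]
  refine sum_congr rfl fun x hx => ?_
  rw [pathMultiplicity, filter_filter]
  refine congrArg card (filter_congr fun p _ => ⟨And.right, fun hpx => ⟨?_, hpx⟩⟩)
  simpa [hpx] using hx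

end PathElement

theorem pathCount_eq_of_same_cycleType_general (n : ℕ) (d : ℕ)
    (lam : Nat.Partition d) (μ : Nat.Partition n) (g g' : Equiv.Perm (Fin n))
    (h : g.cycleType = g'.cycleType) :
    pathCount n d lam μ g = pathCount n d lam μ g' := by
  obtain ⟨c, rfl⟩ := isConj_iff.1 (Perm.isConj_of_cycleType_eq h)
  rw [pathCount_eq_sum_pathMultiplicity, pathCount_eq_sum_pathMultiplicity]
  refine sum_equiv (MulAut.conj c).toEquiv (fun x => ?_)
    fun x _ => (pathMultiplicity_conj lam c x).symm
  have hconj : (c * x * c⁻¹)⁻¹ * (c * g * c⁻¹) = c * (x⁻¹ * g) * c⁻¹ := by group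
  simp only [mem_filter, mem_univ, true_and, MulEquiv.toEquiv_eq_coe, MulEquiv.coe_toEquiv,
    MulAut.conj_apply, hconj, (Perm.partition_eq_of_isConj.1 (isConj_iff.2 ⟨c, rfl⟩)).symm]

/-- The weighted path count between conjugacy classes in the Cayley graph of `S_n`
generated by transpositions depends only on the cycle types of the endpoints. -/
theorem pathCount_eq_of_same_cycleType (n : ℕ) (hn : 1 ≤ n) (d : ℕ)
    (lam : Nat.Partition d) (μ : Nat.Partition n) (g g' : Equiv.Perm (Fin n))
    (h : g.cycleType = g'.cycleType) :
    pathCount n d lam μ g = pathCount n d lam μ g' :=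
  pathCount_eq_of_same_cycleType_general n d lam μ g g' h
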